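/- Let T be a bounded, linear, bijective, positive operator on L²(G, ℂ^{s×r}) that is adjointable with respect to the matrix-valued inner product, and let {E_k}_{k∈ℕ} be a matrix-valued orthonormal basis for L²(G, ℂ^{s×r}) (so that {T E_k}_{k∈ℕ} is a matrix-valued Riesz basis). Let (W_n)_{n≥0} be a sequence of bounded, linear, positive operators on L²(G, ℂ^{s×r}) with W_0 = T and W_{n+1} ∘ W_{n+1} = W_n for every n (so W_n is the iterated square root T^{1/2ⁿ}). Then for every n ∈ ℕ, the sequence {W_n E_k}_{k∈ℕ} is a matrix-valued Riesz basis for L²(G, ℂ^{s×r}). -/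

import Mathlib

open MeasureTheory Filter
open scoped ENNReal ComplexOrder

noncomputable section

/-- The space `L²(G, ℂ^{s×r})` of square-integrable `ℂ^{s×r}`-valued functions on `G`,
realized as an `Lp`-space with values in `EuclideanSpace ℂ (Fin s × Fin r)`
(so that the norm is the Frobenius norm). -/
abbrev MatL2 {G : Type*} [MeasurableSpace G] (μ : Measure G) (s r : ℕ) : Type _ :=
  Lp (α := G) (EuclideanSpace ℂ (Fin s × Fin r)) 2 μ

/-- The matrix-valued inner product `⟨f, g⟩ = ∫_G f(x) g(x)* dμ(x)`, an `s × s` matrix. -/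
def matInner {G : Type*} [MeasurableSpace G] {μ : Measure G} {s r : ℕ}
    (f g : MatL2 μ s r) : Matrix (Fin s) (Fin s) ℂ :=
  Matrix.of fun i j => ∫ x, ∑ n : Fin r, f x (i, n) * (starRingEnd ℂ) (g x (j, n)) ∂μ

/-- Left multiplication by the matrix `A : ℂ^{s×s}` as a continuous linear map on
`ℂ^{s×r} ≅ EuclideanSpace ℂ (Fin s × Fin r)`; it is given by the matrix `A ⊗ I`. -/
def matMulCLM (s r : ℕ) (A : Matrix (Fin s) (Fin s) ℂ) :
    EuclideanSpace ℂ (Fin s × Fin r) →L[ℂ] EuclideanSpace ℂ (Fin s × Fin r) :=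
  LinearMap.toContinuousLinearMap
    (Matrix.toEuclideanLin (Matrix.of fun p q : Fin s × Fin r =>
      if p.2 = q.2 then A p.1 q.1 else 0))

/-- The action of a matrix `A : ℂ^{s×s}` on `h ∈ L²(G, ℂ^{s×r})` by pointwise left
multiplication, `(A h)(x) = A · h(x)`. -/
def matSMul {G : Type*} [MeasurableSpace G] {μ : Measure G} {s r : ℕ}
    (A : Matrix (Fin s) (Fin s) ℂ) (f : MatL2 μ s r) : MatL2 μ s r :=
  (matMulCLM s r A).compLp f

/-- A bounded linear operator `U` on `L²(G, ℂ^{s×r})` is adjointable with respect to the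
matrix-valued inner product if `⟨U f, g⟩ = ⟨f, U* g⟩` (as `s × s` matrices) for all `f, g`,
where `U*` is the Hilbert adjoint of `U`. -/
def MatAdjointable {G : Type*} [MeasurableSpace G] {μ : Measure G} {s r : ℕ}
    (U : MatL2 μ s r →L[ℂ] MatL2 μ s r) : Prop :=
  ∀ f g : MatL2 μ s r,
    matInner (U f) g = matInner f (ContinuousLinearMap.adjoint U g)

/-- A matrix-valued orthonormal basis of `L²(G, ℂ^{s×r})`: `⟨E k, E j⟩ = δ_{kj} I` and
every `f` has the expansion `f = ∑_k ⟨f, E k⟩ E k`, the series converging in norm. -/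
def IsMatONB {G : Type*} [MeasurableSpace G] {μ : Measure G} {s r : ℕ}
    (E : ℕ → MatL2 μ s r) : Prop :=
  (∀ k j : ℕ, matInner (E k) (E j) =
      if k = j then (1 : Matrix (Fin s) (Fin s) ℂ) else (0 : Matrix (Fin s) (Fin s) ℂ)) ∧
  (∀ f : MatL2 μ s r,
    Tendsto (fun N : ℕ => ∑ k ∈ Finset.range N, matSMul (matInner f (E k)) (E k))
      atTop (nhds f))

/-- A matrix-valued Riesz basis of `L²(G, ℂ^{s×r})`: the image of a matrix-valued
orthonormal basis under a bounded, linear, bijective operator that is adjointable with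
respect to the matrix-valued inner product. -/
def IsMatRieszBasis {G : Type*} [MeasurableSpace G] {μ : Measure G} {s r : ℕ}
    (F : ℕ → MatL2 μ s r) : Prop :=
  ∃ (E : ℕ → MatL2 μ s r) (V : MatL2 μ s r →L[ℂ] MatL2 μ s r),
    IsMatONB E ∧ Function.Bijective V ∧ MatAdjointable V ∧ ∀ k : ℕ, F k = V (E k)

/-- The Frobenius norm of an `s × s` complex matrix. -/
def frobNorm {s : ℕ} (A : Matrix (Fin s) (Fin s) ℂ) : ℝ :=
  Real.sqrt (∑ i : Fin s, ∑ j : Fin s, ‖A i j‖ ^ 2)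

end

/-
Adjointability with respect to the matrix-valued inner product says exactly that the operator
commutes with left multiplication by each matrix unit, since the entries of `⟨f, g⟩` are the
scalar inner products `⟪g, e_{ji} f⟫`. An operator commuting with a positive operator commutes
with its positive square root (continuous functional calculus), so by induction every `W n`
is adjointable; bijectivity passes from `W n = W (n+1) ∘ W (n+1)` to `W (n+1)`.
-/

open MeasureTheory

theorem Commute.of_mul_self_eq {A : Type*} [CStarAlgebra A] [PartialOrder A] [StarOrderedRing A]
    {a b m : A} (hb : 0 ≤ b) (hab : b * b = a) (hm : Commute a m) : Commute b m := by
  rw [← CFC.sqrt_unique hab hb, CFC.sqrt_eq_cfc]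
  exact hm.cfc_nnreal _

theorem Function.Bijective.of_comp_self {α : Type*} {f : α → α}
    (hf : Function.Bijective (f ∘ f)) : Function.Bijective f :=
  ⟨hf.1.of_comp, hf.2.of_comp⟩

section MatL2

variable {G : Type*} [MeasurableSpace G] {μ : Measure G} {s r : ℕ}

theorem matMulCLM_single_apply (i j a : Fin s) (n : Fin r)
    (v : EuclideanSpace ℂ (Fin s × Fin r)) :
    matMulCLM s r (Matrix.single j i 1) v (a, n) = if a = j then v (i, n) else 0 := by
  simp [matMulCLM, Matrix.mulVec, dotProduct, Fintype.sum_prod_type, Matrix.single, ite_and,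
    Finset.sum_ite_eq, eq_comm]

variable (μ s r) in
noncomputable def matUnitOp (i j : Fin s) : MatL2 μ s r →L[ℂ] MatL2 μ s r :=
  (matMulCLM s r (Matrix.single j i 1)).compLpL 2 μ

theorem matInner_apply_eq_inner (f g : MatL2 μ s r) (i j : Fin s) :
    matInner f g i j = inner ℂ g (matUnitOp μ s r i j f) := by
  rw [L2.inner_def]
  refine integral_congr_ae ?_
  filter_upwards [ContinuousLinearMap.coeFn_compLpL (matMulCLM s r (Matrix.single j i 1)) f]
    with x hx
  rw [matUnitOp, hx, PiLp.inner_apply, Fintype.sum_prod_type]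
  simp [matMulCLM_single_apply]

theorem matAdjointable_iff_commute (U : MatL2 μ s r →L[ℂ] MatL2 μ s r) :
    MatAdjointable U ↔ ∀ i j, Commute (matUnitOp μ s r i j) U := by
  have key : ∀ f g i j, matInner (U f) g i j = matInner f (U.adjoint g) i j ↔
      inner ℂ g ((matUnitOp μ s r i j * U) f) = inner ℂ g ((U * matUnitOp μ s r i j) f) := by
    intro f g i j
    rw [matInner_apply_eq_inner, matInner_apply_eq_inner, ContinuousLinearMap.adjoint_inner_left]
    rfl
  constructor
  · intro hU i j
    ext1 f
    exact ext_inner_left ℂ fun g => (key f g i j).1 (congrFun₂ (hU f g) i j)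
  · intro hU f g
    ext i j
    exact (key f g i j).2 (by rw [(hU i j).eq])

theorem MatAdjointable.of_mul_self_eq {U V : MatL2 μ s r →L[ℂ] MatL2 μ s r}
    (hV : V.IsPositive) (hVU : V * V = U) (hU : MatAdjointable U) : MatAdjointable V := by
  rw [matAdjointable_iff_commute] at hU ⊢
  exact fun i j => ((hU i j).symm.of_mul_self_eq
    ((V.nonneg_iff_isPositive).2 hV) hVU).symm

end MatL2

theorem stmt_13_general {G : Type*} [MeasurableSpace G]
    (μ : MeasureTheory.Measure G) (s r : ℕ)
    (T : MatL2 μ s r →L[ℂ] MatL2 μ s r)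
    (hTbij : Function.Bijective T) (hTadj : MatAdjointable T)
    (E : ℕ → MatL2 μ s r) (hE : IsMatONB E)
    (W : ℕ → MatL2 μ s r →L[ℂ] MatL2 μ s r)
    (hW0 : W 0 = T) (hWpos : ∀ n : ℕ, (W n).IsPositive)
    (hWsq : ∀ n : ℕ, (W (n + 1)).comp (W (n + 1)) = W n) :
    ∀ n : ℕ, IsMatRieszBasis (fun k => W n (E k)) := by
  have hW : ∀ n, Function.Bijective (W n) ∧ MatAdjointable (W n) := by
    intro n
    induction n with
    | zero => exact hW0 ▸ ⟨hTbij, hTadj⟩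
    | succ n ih =>
      have hsq : W (n + 1) * W (n + 1) = W n := hWsq n
      refine ⟨.of_comp_self ?_, ih.2.of_mul_self_eq (hWpos (n + 1)) hsq⟩
      rw [← ContinuousLinearMap.coe_comp, hWsq n]
      exact ih.1
  exact fun n => ⟨E, W n, hE, (hW n).1, (hW n).2, fun _ => rfl⟩

theorem stmt_13 {G : Type*} [MeasurableSpace G] [TopologicalSpace G] [BorelSpace G]
    [AddCommGroup G] [IsTopologicalAddGroup G] [LocallyCompactSpace G]
    [SigmaCompactSpace G] [TopologicalSpace.MetrizableSpace G]
    (μ : MeasureTheory.Measure G) [μ.IsAddHaarMeasure] (s r : ℕ) (hs : 0 < s) (hr : 0 < r)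
    (T : MatL2 μ s r →L[ℂ] MatL2 μ s r)
    (hTpos : T.IsPositive) (hTbij : Function.Bijective T) (hTadj : MatAdjointable T)
    (E : ℕ → MatL2 μ s r) (hE : IsMatONB E)
    (W : ℕ → MatL2 μ s r →L[ℂ] MatL2 μ s r)
    (hW0 : W 0 = T) (hWpos : ∀ n : ℕ, (W n).IsPositive)
    (hWsq : ∀ n : ℕ, (W (n + 1)).comp (W (n + 1)) = W n) :
    ∀ n : ℕ, IsMatRieszBasis (fun k => W n (E k)) :=
  stmt_13_general μ s r T hTbij hTadj E hE W hW0 hWpos hWsq
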